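/- One-step Riccati comparison via augmentation: with the setup of the Riccati monotonicity lemma, if P̃^{(2)} ≥ P̃^{(1)} ≥ 0 (both self-adjoint positive semidefinite) and R > 0, then the Riccati update map P̃ ↦ P̃ − P̃ C*(C P̃ C* + R)⁻¹ C P̃ is monotone: P̃^{(2)} ≥ P̃^{(1)} implies P̃^{(2)} − P̃^{(2)} C*(C P̃^{(2)} C* + R)⁻¹ C P̃^{(2)} ≥ P̃^{(1)} − P̃^{(1)} C*(C P̃^{(1)} C* + R)⁻¹ C P̃^{(1)}. -/

import Mathlib

open ContinuousLinearMap
open scoped RealInnerProductSpace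

/-- The Riccati update map `P̃ ↦ P̃ - P̃ C* (C P̃ C* + R)⁻¹ C P̃`. -/
noncomputable def riccatiUpdate {X : Type*} [NormedAddCommGroup X]
    [InnerProductSpace ℝ X] [CompleteSpace X] {m : ℕ}
    (C : X →L[ℝ] EuclideanSpace ℝ (Fin m))
    (R : EuclideanSpace ℝ (Fin m) →L[ℝ] EuclideanSpace ℝ (Fin m))
    (Pt : X →L[ℝ] X) : X →L[ℝ] X :=
  Pt - Pt ∘L adjoint C ∘L Ring.inverse (C ∘L Pt ∘L adjoint C + R) ∘L C ∘L Pt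

/-!
`⟪v, riccatiUpdate C R P v⟫` is the minimum over `y` of the cost
`⟪v - C* y, P (v - C* y)⟫ + ⟪y, R y⟫`: completing the square with the innovation covariance
`S = C P C* + R` shows that the cost exceeds it by `⟪y - z, S (y - z)⟫` with `z = S⁻¹ C P v`.
The cost is monotone in `P`, so comparing the cost of `P̃¹` and `P̃²` at the minimiser for `P̃²`
gives the comparison of the updates.
-/

theorem isUnit_of_inner_map_self_pos {E : Type*} [NormedAddCommGroup E] [InnerProductSpace ℝ E]
    [FiniteDimensional ℝ E] (T : E →L[ℝ] E) (hT : ∀ x ≠ 0, 0 < ⟪x, T x⟫) : IsUnit T := by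
  have hinj : Function.Injective T := by
    refine (injective_iff_map_eq_zero T).mpr fun x hx => ?_
    by_contra hx0
    simpa [hx] using hT x hx0
  have : CompleteSpace E := FiniteDimensional.complete ℝ E
  exact ContinuousLinearMap.isUnit_iff_bijective.mpr
    ⟨hinj, LinearMap.injective_iff_surjective (f := (T : E →ₗ[ℝ] E)) |>.mp hinj⟩

section Riccati

variable {X : Type*} [NormedAddCommGroup X] [InnerProductSpace ℝ X] [CompleteSpace X] {m : ℕ}
  (C : X →L[ℝ] EuclideanSpace ℝ (Fin m))
  (R : EuclideanSpace ℝ (Fin m) →L[ℝ] EuclideanSpace ℝ (Fin m)) (P : X →L[ℝ] X)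

noncomputable def innovationCov : EuclideanSpace ℝ (Fin m) →L[ℝ] EuclideanSpace ℝ (Fin m) :=
  C ∘L P ∘L adjoint C + R

noncomputable def riccatiCost (v : X) (y : EuclideanSpace ℝ (Fin m)) : ℝ :=
  ⟪v - adjoint C y, P (v - adjoint C y)⟫ + ⟪y, R y⟫

variable {C R P}

theorem inner_innovationCov_apply (w₁ w₂ : EuclideanSpace ℝ (Fin m)) :
    ⟪w₁, innovationCov C R P w₂⟫ = ⟪adjoint C w₁, P (adjoint C w₂)⟫ + ⟪w₁, R w₂⟫ := by
  rw [innovationCov, add_apply, inner_add_right, comp_apply, comp_apply, ← adjoint_inner_left]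

theorem inner_innovationCov_self_pos (hP : ∀ v, 0 ≤ ⟪v, P v⟫)
    (hR : ∀ y ≠ 0, 0 < ⟪y, R y⟫) {w : EuclideanSpace ℝ (Fin m)} (hw : w ≠ 0) :
    0 < ⟪w, innovationCov C R P w⟫ := by
  rw [inner_innovationCov_apply]
  exact add_pos_of_nonneg_of_pos (hP _) (hR w hw)

theorem inner_innovationCov_self_nonneg (hP : ∀ v, 0 ≤ ⟪v, P v⟫)
    (hR : ∀ y ≠ 0, 0 < ⟪y, R y⟫) (w : EuclideanSpace ℝ (Fin m)) :
    0 ≤ ⟪w, innovationCov C R P w⟫ := by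
  rcases eq_or_ne w 0 with rfl | hw
  · simp
  · exact (inner_innovationCov_self_pos hP hR hw).le

theorem isSelfAdjoint_innovationCov (hP : IsSelfAdjoint P) (hR : IsSelfAdjoint R) :
    IsSelfAdjoint (innovationCov C R P) :=
  (hP.conj_adjoint C).add hR

theorem riccatiCost_sub_inner_riccatiUpdate (hP : IsSelfAdjoint P) (hR : IsSelfAdjoint R)
    (hS : IsUnit (innovationCov C R P)) (v : X) (y : EuclideanSpace ℝ (Fin m)) :
    riccatiCost C R P v y - ⟪v, riccatiUpdate C R P v⟫ =
      ⟪y - Ring.inverse (innovationCov C R P) (C (P v)),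
        innovationCov C R P (y - Ring.inverse (innovationCov C R P) (C (P v)))⟫ := by
  set S := innovationCov C R P
  set z := Ring.inverse S (C (P v))
  have hSz : S z = C (P v) := by
    simpa using congr($(Ring.mul_inverse_cancel S hS) (C (P v)))
  have hPsymm : ∀ a b, ⟪P a, b⟫ = ⟪a, P b⟫ := hP.isSymmetric
  have hSsymm : ∀ a b, ⟪S a, b⟫ = ⟪a, S b⟫ := (isSelfAdjoint_innovationCov hP hR).isSymmetric
  have hupdate : ⟪v, riccatiUpdate C R P v⟫ = ⟪v, P v⟫ - ⟪z, S z⟫ := by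
    have : riccatiUpdate C R P v = P v - P (adjoint C z) := rfl
    rw [this, inner_sub_right, ← hPsymm v (adjoint C z), adjoint_inner_right, hSz,
      real_inner_comm (C (P v)) z]
  have hcost : riccatiCost C R P v y = ⟪v, P v⟫ - 2 * ⟪y, S z⟫ + ⟪y, S y⟫ := by
    have hcross : ⟪v, P (adjoint C y)⟫ = ⟪y, S z⟫ := by
      rw [← hPsymm v, adjoint_inner_right, hSz, real_inner_comm]
    rw [riccatiCost, inner_innovationCov_apply y y, map_sub, inner_sub_left, inner_sub_right,
      inner_sub_right, adjoint_inner_left, ← hSz, hcross]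
    ring
  have hsquare : ⟪y - z, S (y - z)⟫ = ⟪y, S y⟫ - 2 * ⟪y, S z⟫ + ⟪z, S z⟫ := by
    rw [map_sub, inner_sub_left, inner_sub_right, inner_sub_right,
      ← hSsymm z y, real_inner_comm (S z)]
    ring
  rw [hcost, hupdate, hsquare]
  ring

theorem isLeast_riccatiCost (hP : IsSelfAdjoint P) (hP_nonneg : ∀ v, 0 ≤ ⟪v, P v⟫)
    (hR : IsSelfAdjoint R) (hR_pos : ∀ y ≠ 0, 0 < ⟪y, R y⟫) (v : X) :
    IsLeast (Set.range (riccatiCost C R P v)) ⟪v, riccatiUpdate C R P v⟫ := by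
  have hS : IsUnit (innovationCov C R P) :=
    isUnit_of_inner_map_self_pos _ fun _ hw => inner_innovationCov_self_pos hP_nonneg hR_pos hw
  refine ⟨⟨Ring.inverse (innovationCov C R P) (C (P v)), ?_⟩, ?_⟩
  · simpa [sub_eq_zero] using riccatiCost_sub_inner_riccatiUpdate hP hR hS v
      (Ring.inverse (innovationCov C R P) (C (P v)))
  · rintro _ ⟨y, rfl⟩
    have hsquare := riccatiCost_sub_inner_riccatiUpdate hP hR hS v y
    have := inner_innovationCov_self_nonneg (C := C) hP_nonneg hR_pos
      (y - Ring.inverse (innovationCov C R P) (C (P v)))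
    linarith

end Riccati

/-- One-step monotonicity of the Riccati update map: if `0 ≤ P̃¹ ≤ P̃²` (both
self-adjoint, Loewner order) and `R` is symmetric positive definite, then
`riccatiUpdate C R P̃¹ ≤ riccatiUpdate C R P̃²`. -/
theorem riccati_update_monotone {X : Type*} [NormedAddCommGroup X]
    [InnerProductSpace ℝ X] [CompleteSpace X] {m : ℕ}
    (C : X →L[ℝ] EuclideanSpace ℝ (Fin m))
    (R : EuclideanSpace ℝ (Fin m) →L[ℝ] EuclideanSpace ℝ (Fin m))
    (hRsa : IsSelfAdjoint R)
    (hRpos : ∀ y : EuclideanSpace ℝ (Fin m), y ≠ 0 → 0 < ⟪y, R y⟫)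
    (P1 P2 : X →L[ℝ] X) (hP1sa : IsSelfAdjoint P1) (hP2sa : IsSelfAdjoint P2)
    (hP1pos : ∀ v : X, 0 ≤ ⟪v, P1 v⟫)
    (hle : ∀ v : X, ⟪v, P1 v⟫ ≤ ⟪v, P2 v⟫) :
    ∀ v : X, ⟪v, riccatiUpdate C R P1 v⟫ ≤ ⟪v, riccatiUpdate C R P2 v⟫ := by
  intro v
  have hP2pos : ∀ w, 0 ≤ ⟪w, P2 w⟫ := fun w => (hP1pos w).trans (hle w)
  obtain ⟨⟨y, hy⟩, -⟩ := isLeast_riccatiCost (C := C) hP2sa hP2pos hRsa hRpos v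
  calc ⟪v, riccatiUpdate C R P1 v⟫
      ≤ riccatiCost C R P1 v y := (isLeast_riccatiCost hP1sa hP1pos hRsa hRpos v).2 ⟨y, rfl⟩
    _ ≤ riccatiCost C R P2 v y := add_le_add_left (hle _) _
    _ = ⟪v, riccatiUpdate C R P2 v⟫ := hy
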